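/- Let φ : X → Y be an extension of compact flows of a topological group T, such that the set of almost periodic points of the flow on X is dense in X and the flow on Y is minimal. Then φ is semi-open. -/

import Mathlib

/-- A continuous surjection `g : A → B` is *semi-open* if for every nonempty open set
`U ⊆ A`, the interior of the image `g '' U` is nonempty. -/
def SemiOpen {A B : Type*} [TopologicalSpace A] [TopologicalSpace B] (g : A → B) : Prop :=
  ∀ U : Set A, IsOpen U → U.Nonempty → (interior (g '' U)).Nonempty

/-- A point `x` is *almost periodic* for the flow `T ↷ X` if its orbit closure
`cl(T·x)` is a minimal subset, i.e. every point of `cl(T·x)` has orbit closure equal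
to `cl(T·x)`. -/
def IsAlmostPeriodicPt (T : Type*) {X : Type*} [Monoid T] [MulAction T X]
    [TopologicalSpace X] (x : X) : Prop :=
  x ∈ closure (MulAction.orbit T x) ∧
  ∀ z ∈ closure (MulAction.orbit T x),
    closure (MulAction.orbit T z) = closure (MulAction.orbit T x)

/-!
Let `x ∈ U` be almost periodic and `F ⊆ U` a closed neighbourhood of `x`. Every point of the
minimal set `M = cl(T·x)` returns to `int F`, so by compactness finitely many translates
`t • (F ∩ M)` cover `M`. Since `Y` is minimal, `φ(M) = Y`, hence `Y` is a finite union of the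
closed sets `t • φ(F ∩ M)`; one of them has nonempty interior, and therefore so does
`φ(F ∩ M) ⊆ φ(U)`.
-/

open Pointwise MulAction Set

theorem Finset.exists_nonempty_interior_of_isClosed {X ι : Type*} [TopologicalSpace X]
    {s : Finset ι} {f : ι → Set X} (hc : ∀ i ∈ s, IsClosed (f i))
    (h : (interior (⋃ i ∈ s, f i)).Nonempty) : ∃ i ∈ s, (interior (f i)).Nonempty := by
  classical
  induction s using Finset.induction_on with
  | empty => simp at h
  | insert a s _ ih =>
    rw [Finset.set_biUnion_insert] at h
    by_cases hs : interior (⋃ i ∈ s, f i) = ∅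
    · rw [interior_union_isClosed_of_interior_empty (hc a (Finset.mem_insert_self a s)) hs] at h
      exact ⟨a, Finset.mem_insert_self a s, h⟩
    · obtain ⟨i, hi, hint⟩ :=
        ih (fun i hi ↦ hc i (Finset.mem_insert_of_mem hi)) (Set.nonempty_iff_ne_empty.2 hs)
      exact ⟨i, Finset.mem_insert_of_mem hi, hint⟩

namespace MulActionHom

variable {G X Y : Type*} [Monoid G] [MulAction G X] [MulAction G Y]

theorem image_orbit (f : X →[G] Y) (x : X) : f '' orbit G x = orbit G (f x) := by
  simp only [orbit, ← range_comp, Function.comp_def, map_smul]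

theorem image_closure_orbit_eq_univ [TopologicalSpace X] [CompactSpace X] [TopologicalSpace Y]
    [T2Space Y] (f : X →[G] Y) (hf : Continuous f) {x : X} (hx : Dense (orbit G (f x))) :
    f '' closure (orbit G x) = univ := by
  rw [image_closure_of_isCompact isClosed_closure.isCompact hf.continuousOn, image_orbit,
    hx.closure_eq]

end MulActionHom

namespace IsAlmostPeriodicPt

variable {G X : Type*} [Group G] [MulAction G X] [TopologicalSpace X] {x : X}

theorem closure_orbit_subset_iUnion_smul (hx : IsAlmostPeriodicPt G x) {V : Set X}
    (hV : IsOpen V) (hxV : x ∈ V) : closure (orbit G x) ⊆ ⋃ g : G, g • V := by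
  intro z hz
  have hxz : x ∈ closure (orbit G z) := by rw [hx.2 z hz]; exact hx.1
  obtain ⟨_, hgzV, g, rfl⟩ := mem_closure_iff.1 hxz V hV hxV
  exact mem_iUnion.2 ⟨g⁻¹, g • z, hgzV, inv_smul_smul g z⟩

theorem exists_finset_closure_orbit_subset_biUnion_smul [CompactSpace X]
    [ContinuousConstSMul G X] (hx : IsAlmostPeriodicPt G x) {F : Set X} (hxF : x ∈ interior F) :
    ∃ s : Finset G, closure (orbit G x) ⊆ ⋃ g ∈ s, g • (F ∩ closure (orbit G x)) := by
  set M := closure (orbit G x)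
  obtain ⟨s, hs⟩ := isClosed_closure.isCompact.elim_finite_subcover (fun g : G ↦ g • interior F)
    (fun g ↦ isOpen_interior.smul g) (hx.closure_orbit_subset_iUnion_smul isOpen_interior hxF)
  refine ⟨s, fun m hm ↦ ?_⟩
  obtain ⟨g, hg, v, hv, rfl⟩ := mem_iUnion₂.1 (hs hm)
  have hvM : v ∈ M := by
    simpa using smul_closure_orbit_subset g⁻¹ x (smul_mem_smul_set (a := g⁻¹) hm)
  exact mem_iUnion₂.2 ⟨g, hg, smul_mem_smul_set ⟨interior_subset hv, hvM⟩⟩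

end IsAlmostPeriodicPt

theorem MulActionHom.nonempty_interior_image_of_isAlmostPeriodicPt {G X Y : Type*} [Group G]
    [MulAction G X] [MulAction G Y] [TopologicalSpace X] [CompactSpace X]
    [ContinuousConstSMul G X] [TopologicalSpace Y] [T2Space Y] [ContinuousConstSMul G Y]
    (f : X →[G] Y) (hf : Continuous f) {x : X} (hx : IsAlmostPeriodicPt G x)
    (hmin : Dense (orbit G (f x))) {F : Set X} (hF : IsClosed F) (hxF : x ∈ interior F) :
    (interior (f '' F)).Nonempty := by
  set M := closure (orbit G x)
  obtain ⟨s, hs⟩ := hx.exists_finset_closure_orbit_subset_biUnion_smul hxF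
  have hK : IsClosed (f '' (F ∩ M)) := ((hF.inter isClosed_closure).isCompact.image hf).isClosed
  have hcover : ⋃ g ∈ s, g • f '' (F ∩ M) = univ := by
    refine eq_univ_of_univ_subset ?_
    calc univ = f '' M := (f.image_closure_orbit_eq_univ hf hmin).symm
      _ ⊆ f '' ⋃ g ∈ s, g • (F ∩ M) := image_mono hs
      _ = ⋃ g ∈ s, g • f '' (F ∩ M) := by simp only [image_iUnion₂, image_smul_set]
  obtain ⟨g, -, hg⟩ := s.exists_nonempty_interior_of_isClosed (fun g _ ↦ hK.smul g)
    (by rw [hcover, interior_univ]; exact ⟨f x, trivial⟩)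
  rw [interior_smul, smul_set_nonempty] at hg
  exact hg.mono (interior_mono (image_mono inter_subset_left))

theorem semiOpen_of_denseAP_of_minimal
    {T X Y : Type*} [Group T] [TopologicalSpace T]
    [TopologicalSpace X] [CompactSpace X] [T2Space X]
    [MulAction T X] [ContinuousSMul T X]
    [TopologicalSpace Y] [T2Space Y]
    [MulAction T Y] [ContinuousSMul T Y]
    {φ : X → Y} (hc : Continuous φ)
    (hequiv : ∀ (t : T) (x : X), φ (t • x) = t • φ x)
    (hap : Dense {x : X | IsAlmostPeriodicPt T x})
    (hmin : ∀ y : Y, Dense (MulAction.orbit T y)) :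
    SemiOpen φ := by
  intro U hU hUne
  obtain ⟨x, hxAP, hxU⟩ := hap.exists_mem_open hU hUne
  obtain ⟨F, hFx, hFc, hFU⟩ := exists_mem_nhds_isClosed_subset (hU.mem_nhds hxU)
  let f : X →[T] Y := ⟨φ, hequiv⟩
  exact (f.nonempty_interior_image_of_isAlmostPeriodicPt hc hxAP (hmin (φ x)) hFc
    (mem_interior_iff_mem_nhds.2 hFx)).mono (interior_mono (image_mono hFU))
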